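/- If μ > 0, then for every x ≥ 0 the function t ↦ H(t, x) is monotone increasing on [0, T), where H(t, x) = (2μ²(T−t) − 2μx + 3)·Φ((x − μ(T−t))/√(T−t)) − 2μ√(T−t)·φ((x − μ(T−t))/√(T−t)) − e^{2μx}·Φ((−x − μ(T−t))/√(T−t)) − 2(1 + μ²(T−t)). -/

import Mathlib

/-!
With `τ = T - t` and `d = (x - μτ)/√τ`, the reflection identity `e^{2μx} φ((-x - μτ)/√τ) = φ(d)`
lets the two density terms of `∂ₜH` merge, and the derivative collapses to
`∂ₜH = 2μ²(1 - Φ(d)) + 2(x + μτ) τ^{-3/2} φ(d)`, which is nonnegative as soon as `μ, x ≥ 0`.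
-/

open Set

/-- Standard normal CDF. -/
noncomputable def stdNormalCDF (x : ℝ) : ℝ :=
  ∫ t in Iic x, (Real.sqrt (2 * Real.pi))⁻¹ * Real.exp (-(t ^ 2) / 2)

/-- Standard normal density. -/
noncomputable def stdNormalPDF (x : ℝ) : ℝ :=
  (Real.sqrt (2 * Real.pi))⁻¹ * Real.exp (-(x ^ 2) / 2)

/-- The function `H` from (4.2). -/
noncomputable def Hfun (μ T t x : ℝ) : ℝ :=
  (2 * μ ^ 2 * (T - t) - 2 * μ * x + 3) *
      stdNormalCDF ((x - μ * (T - t)) / Real.sqrt (T - t))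
    - 2 * μ * Real.sqrt (T - t) * stdNormalPDF ((x - μ * (T - t)) / Real.sqrt (T - t))
    - Real.exp (2 * μ * x) * stdNormalCDF ((-x - μ * (T - t)) / Real.sqrt (T - t))
    - 2 * (1 + μ ^ 2 * (T - t))

open MeasureTheory ProbabilityTheory

lemma stdNormalPDF_eq_gaussianPDFReal : stdNormalPDF = gaussianPDFReal 0 1 := by
  ext x
  simp [stdNormalPDF, gaussianPDFReal]

lemma stdNormalCDF_eq_setIntegral (x : ℝ) : stdNormalCDF x = ∫ t in Iic x, stdNormalPDF t := rfl

lemma stdNormalPDF_nonneg (x : ℝ) : 0 ≤ stdNormalPDF x := by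
  rw [stdNormalPDF_eq_gaussianPDFReal]
  exact gaussianPDFReal_nonneg 0 1 x

lemma continuous_stdNormalPDF : Continuous stdNormalPDF := by
  unfold stdNormalPDF
  fun_prop

lemma integrable_stdNormalPDF : Integrable stdNormalPDF := by
  rw [stdNormalPDF_eq_gaussianPDFReal]
  exact integrable_gaussianPDFReal 0 1

lemma stdNormalCDF_le_one (x : ℝ) : stdNormalCDF x ≤ 1 :=
  calc stdNormalCDF x ≤ ∫ t, stdNormalPDF t :=
        setIntegral_le_integral integrable_stdNormalPDF (.of_forall stdNormalPDF_nonneg)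
    _ = 1 := by
      rw [stdNormalPDF_eq_gaussianPDFReal]
      exact integral_gaussianPDFReal_eq_one 0 one_ne_zero

lemma hasDerivAt_stdNormalCDF (x : ℝ) : HasDerivAt stdNormalCDF (stdNormalPDF x) x := by
  have hsplit : ∀ y, stdNormalCDF y = stdNormalCDF 0 + ∫ t in (0 : ℝ)..y, stdNormalPDF t := by
    intro y
    rw [stdNormalCDF_eq_setIntegral, stdNormalCDF_eq_setIntegral,
      ← intervalIntegral.integral_Iic_sub_Iic integrable_stdNormalPDF.integrableOn
        integrable_stdNormalPDF.integrableOn]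
    ring
  refine (HasDerivAt.const_add _ ?_).congr_of_eventuallyEq (.of_forall hsplit)
  exact intervalIntegral.integral_hasDerivAt_right integrable_stdNormalPDF.intervalIntegrable
    (continuous_stdNormalPDF.stronglyMeasurableAtFilter _ _) continuous_stdNormalPDF.continuousAt

lemma hasDerivAt_stdNormalPDF (x : ℝ) : HasDerivAt stdNormalPDF (-x * stdNormalPDF x) x := by
  have hexp : HasDerivAt (fun y : ℝ => -(y ^ 2) / 2) (-x) x :=
    ((hasDerivAt_pow 2 x).neg.div_const 2).congr_deriv (by push_cast; ring)
  unfold stdNormalPDF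
  exact (hexp.exp.const_mul _).congr_deriv (by ring)

lemma exp_mul_stdNormalPDF_neg_sub (μ x : ℝ) {s : ℝ} (hs : s ≠ 0) :
    Real.exp (2 * μ * x) * stdNormalPDF ((-x - μ * s ^ 2) / s)
      = stdNormalPDF ((x - μ * s ^ 2) / s) := by
  unfold stdNormalPDF
  rw [mul_left_comm, ← Real.exp_add]
  congr 2
  field_simp
  ring

lemma hasDerivAt_sqrt_const_sub {T t : ℝ} (ht : t < T) :
    HasDerivAt (fun u => Real.sqrt (T - u)) (-1 / (2 * Real.sqrt (T - t))) t := by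
  simpa using ((hasDerivAt_id t).const_sub T).sqrt (sub_pos.2 ht).ne'

lemma hasDerivAt_drift_div_sqrt (c μ : ℝ) {T t : ℝ} (ht : t < T) :
    HasDerivAt (fun u => (c - μ * (T - u)) / Real.sqrt (T - u))
      ((c + μ * (T - t)) / (2 * Real.sqrt (T - t) ^ 3)) t := by
  have hs : 0 < Real.sqrt (T - t) := Real.sqrt_pos.2 (sub_pos.2 ht)
  have hnum : HasDerivAt (fun u => c - μ * (T - u)) μ t := by
    simpa using (((hasDerivAt_id t).const_sub T).const_mul μ).const_sub c
  refine (hnum.div (hasDerivAt_sqrt_const_sub ht) hs.ne').congr_deriv ?_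
  have hsq := Real.sq_sqrt (sub_pos.2 ht).le
  set s := Real.sqrt (T - t)
  rw [← hsq]
  field_simp
  ring

lemma hasDerivAt_Hfun (μ x : ℝ) {T t : ℝ} (ht : t < T) :
    HasDerivAt (fun u => Hfun μ T u x)
      (2 * μ ^ 2 * (1 - stdNormalCDF ((x - μ * (T - t)) / Real.sqrt (T - t)))
        + 2 * (x + μ * (T - t)) / Real.sqrt (T - t) ^ 3
          * stdNormalPDF ((x - μ * (T - t)) / Real.sqrt (T - t))) t := by
  have hs : 0 < Real.sqrt (T - t) := Real.sqrt_pos.2 (sub_pos.2 ht)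
  have hτ : HasDerivAt (fun u => T - u) (-1) t := by simpa using (hasDerivAt_id t).const_sub T
  have hd₁ := hasDerivAt_drift_div_sqrt x μ ht
  have hd₂ := hasDerivAt_drift_div_sqrt (-x) μ ht
  have hA := ((hτ.const_mul (2 * μ ^ 2)).sub_const (2 * μ * x)).add_const 3
  have hB := (hasDerivAt_sqrt_const_sub ht).const_mul (2 * μ)
  have hD := ((hτ.const_mul (μ ^ 2)).const_add 1).const_mul 2
  have hΦ₁ := (hasDerivAt_stdNormalCDF _).comp t hd₁
  have hφ₁ := (hasDerivAt_stdNormalPDF _).comp t hd₁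
  have hΦ₂ := ((hasDerivAt_stdNormalCDF _).comp t hd₂).const_mul (Real.exp (2 * μ * x))
  have hH := (((hA.mul hΦ₁).sub (hB.mul hφ₁)).sub hΦ₂).sub hD
  refine hH.congr_deriv ?_
  simp only [Function.comp_apply]
  have hreflect := exp_mul_stdNormalPDF_neg_sub μ x hs.ne'
  have hsq := Real.sq_sqrt (sub_pos.2 ht).le
  set s := Real.sqrt (T - t)
  rw [← hsq, ← mul_assoc (Real.exp _), hreflect]
  field_simp
  ring

theorem Hfun_monotoneOn_Iio {μ x : ℝ} (hμ : 0 ≤ μ) (hx : 0 ≤ x) (T : ℝ) :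
    MonotoneOn (fun t => Hfun μ T t x) (Iio T) := by
  refine monotoneOn_of_hasDerivWithinAt_nonneg (convex_Iio T)
    (fun t ht => (hasDerivAt_Hfun μ x ht).continuousAt.continuousWithinAt)
    (fun t ht => (hasDerivAt_Hfun μ x (interior_Iio.subset ht)).hasDerivWithinAt) ?_
  rw [interior_Iio]
  intro t ht
  have hτ : 0 ≤ T - t := (sub_pos.2 ht).le
  exact add_nonneg (mul_nonneg (by positivity) (sub_nonneg.2 (stdNormalCDF_le_one _)))
    (mul_nonneg (by positivity) (stdNormalPDF_nonneg _))

theorem Hfun_monotone_in_time_general (μ T : ℝ) (hμ : 0 < μ) (x : ℝ) (hx : 0 ≤ x) :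
    MonotoneOn (fun t => Hfun μ T t x) (Ico 0 T) :=
  (Hfun_monotoneOn_Iio hμ.le hx T).mono Ico_subset_Iio_self

/-- if `μ > 0` then `t ↦ H(t, x)` is monotone increasing on `[0, T)`
for every `x ≥ 0`. -/
theorem Hfun_monotone_in_time (μ T : ℝ) (hμ : 0 < μ) (hT : 0 < T) (x : ℝ) (hx : 0 ≤ x) :
    MonotoneOn (fun t => Hfun μ T t x) (Ico 0 T) :=
  Hfun_monotone_in_time_general μ T hμ x hx
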